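/- arXiv:0903.5237 — 2 statements merged into one kernel-verified Lean document; each statement's English description precedes it below -/
import Mathlib

section
/- Let n ≥ 1 and let Λ, T be n×n unitary matrices satisfying the DMSA equations with spectrum {0}, i.e., 0 = [[Λ,Λ†],Λ] + [[Λ,T],T†] + [[Λ,T†],T] and 0 = [[T,T†],T] + [[T,Λ],Λ†] + [[T,Λ†],Λ]. If the representation is irreducible, i.e., the only subspaces of ℂⁿ invariant under both Λ and T are 0 and ℂⁿ, then n = 1. -/
open scoped Matrix BigOperators

/-- The commutator `[A,B] = AB − BA` of square matrices. -/
noncomputable def matComm {n : ℕ} (A B : Matrix (Fin n) (Fin n) ℂ) : Matrix (Fin n) (Fin n) ℂ :=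
  A * B - B * A

/-!
Pairing the first equation with `Λ` in the Frobenius inner product, i.e. multiplying by `Λᴴ`
and taking the trace, turns each term into a squared norm, since
`tr (Aᴴ [[A, B], Bᴴ]) = ‖[A, B]‖²` for all `A, B`. With `μ = 0` this gives
`‖[Λ, Λᴴ]‖² + ‖[Λ, T]‖² + ‖[Λ, Tᴴ]‖² = 0`, so `Λ` and `T` commute. By Schur's lemma both act
as scalars on an irreducible representation, so every line is invariant and `n = 1`.
-/

open Matrix Module Module.End
open scoped ComplexOrder

section

variable {n : ℕ}

def IsIrreduciblePair (Λ T : Matrix (Fin n) (Fin n) ℂ) : Prop :=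
  ∀ W : Submodule ℂ (Fin n → ℂ),
    (∀ v ∈ W, Λ *ᵥ v ∈ W) → (∀ v ∈ W, T *ᵥ v ∈ W) → W = ⊥ ∨ W = ⊤

theorem matComm_eq_zero_iff {A B : Matrix (Fin n) (Fin n) ℂ} : matComm A B = 0 ↔ Commute A B :=
  sub_eq_zero

theorem trace_conjTranspose_mul_matComm_matComm (A B : Matrix (Fin n) (Fin n) ℂ) :
    (Aᴴ * matComm (matComm A B) Bᴴ).trace = ((matComm A B)ᴴ * matComm A B).trace := by
  have cyc₁ := trace_mul_comm (Aᴴ * A * B) Bᴴ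
  have cyc₂ := trace_mul_comm (Aᴴ * B * A) Bᴴ
  simp only [Matrix.mul_assoc] at cyc₁ cyc₂
  simp only [matComm, conjTranspose_sub, conjTranspose_mul, Matrix.mul_sub, Matrix.sub_mul,
    Matrix.mul_assoc, trace_sub, cyc₁, cyc₂]
  ring

theorem commute_of_dmsa_eq_zero {Λ T : Matrix (Fin n) (Fin n) ℂ}
    (h : matComm (matComm Λ Λᴴ) Λ + matComm (matComm Λ T) Tᴴ + matComm (matComm Λ Tᴴ) T = 0) :
    Commute Λ T := by
  have hsum := congrArg (fun M => (Λᴴ * M).trace) h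
  simp only [Matrix.mul_add, trace_add, Matrix.mul_zero, trace_zero] at hsum
  have hΛΛstar := trace_conjTranspose_mul_matComm_matComm Λ Λᴴ
  have hΛTstar := trace_conjTranspose_mul_matComm_matComm Λ Tᴴ
  rw [conjTranspose_conjTranspose] at hΛΛstar hΛTstar
  rw [hΛΛstar, trace_conjTranspose_mul_matComm_matComm, hΛTstar] at hsum
  have nonneg (C : Matrix (Fin n) (Fin n) ℂ) : 0 ≤ (Cᴴ * C).trace :=
    (posSemidef_conjTranspose_mul_self C).trace_nonneg
  have hΛT : ((matComm Λ T)ᴴ * matComm Λ T).trace = 0 := by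
    rw [add_assoc, add_eq_zero_iff_of_nonneg (nonneg _) (add_nonneg (nonneg _) (nonneg _)),
      add_eq_zero_iff_of_nonneg (nonneg _) (nonneg _)] at hsum
    exact hsum.2.1
  exact matComm_eq_zero_iff.mp (trace_conjTranspose_mul_self_eq_zero_iff.mp hΛT)

variable {Λ T : Matrix (Fin n) (Fin n) ℂ}

/-- Schur's lemma for an irreducible pair. -/
theorem IsIrreduciblePair.exists_mulVec_eq_smul (hirr : IsIrreduciblePair Λ T) (hn : 0 < n)
    {A : Matrix (Fin n) (Fin n) ℂ} (hΛ : Commute A Λ) (hT : Commute A T) :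
    ∃ c : ℂ, ∀ v, A *ᵥ v = c • v := by
  have : Nonempty (Fin n) := ⟨⟨0, hn⟩⟩
  obtain ⟨c, hc⟩ := exists_eigenvalue (toLinAlgEquiv' A)
  have invariant {B : Matrix (Fin n) (Fin n) ℂ} (hB : Commute A B) :
      ∀ v ∈ eigenspace (toLinAlgEquiv' A) c, B *ᵥ v ∈ eigenspace (toLinAlgEquiv' A) c :=
    fun v hv => mapsTo_genEigenspace_of_comm (hB.map toLinAlgEquiv') c 1 hv
  obtain hbot | htop := hirr _ (invariant hΛ) (invariant hT)
  · exact absurd hbot hc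
  · refine ⟨c, fun v => ?_⟩
    have hv : v ∈ eigenspace (toLinAlgEquiv' A) c := htop ▸ Submodule.mem_top
    simpa using mem_eigenspace_iff.mp hv

theorem IsIrreduciblePair.eq_one_of_mulVec_eq_smul (hirr : IsIrreduciblePair Λ T) (hn : 0 < n)
    {a b : ℂ} (hΛ : ∀ v, Λ *ᵥ v = a • v) (hT : ∀ v, T *ᵥ v = b • v) : n = 1 := by
  set e : Fin n → ℂ := Pi.single ⟨0, hn⟩ 1
  have he : e ≠ 0 := Pi.single_ne_zero_iff.mpr one_ne_zero
  obtain hbot | htop := hirr (Submodule.span ℂ {e})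
    (fun v hv => hΛ v ▸ Submodule.smul_mem _ _ hv) (fun v hv => hT v ▸ Submodule.smul_mem _ _ hv)
  · exact absurd (Submodule.span_singleton_eq_bot.mp hbot) he
  · have := finrank_span_singleton (K := ℂ) he
    rwa [htop, finrank_top, Module.finrank_fin_fun] at this

end

theorem irreducible_unitary_rep_mu_zero_is_onedim_general (n : ℕ) (hn : 0 < n)
    (Λ T : Matrix (Fin n) (Fin n) ℂ)
    (h1 : 0 =
      matComm (matComm Λ Λᴴ) Λ + matComm (matComm Λ T) Tᴴ + matComm (matComm Λ Tᴴ) T)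
    (hirr : ∀ W : Submodule ℂ (Fin n → ℂ),
      (∀ v ∈ W, Λ.mulVec v ∈ W) → (∀ v ∈ W, T.mulVec v ∈ W) → W = ⊥ ∨ W = ⊤) :
    n = 1 := by
  have hirr : IsIrreduciblePair Λ T := hirr
  have hΛT := commute_of_dmsa_eq_zero h1.symm
  obtain ⟨a, ha⟩ := hirr.exists_mulVec_eq_smul hn (Commute.refl Λ) hΛT
  obtain ⟨b, hb⟩ := hirr.exists_mulVec_eq_smul hn hΛT.symm (Commute.refl T)
  exact hirr.eq_one_of_mulVec_eq_smul hn ha hb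

/-- Every irreducible unitary representation of `U₄(A)` with `Spec(A) = {0}` is
one-dimensional. -/
theorem irreducible_unitary_rep_mu_zero_is_onedim (n : ℕ) (hn : 0 < n)
    (Λ T : Matrix (Fin n) (Fin n) ℂ)
    (hΛ : Λ ∈ Matrix.unitaryGroup (Fin n) ℂ) (hT : T ∈ Matrix.unitaryGroup (Fin n) ℂ)
    (h1 : 0 =
      matComm (matComm Λ Λᴴ) Λ + matComm (matComm Λ T) Tᴴ + matComm (matComm Λ Tᴴ) T)
    (h2 : 0 =
      matComm (matComm T Tᴴ) T + matComm (matComm T Λ) Λᴴ + matComm (matComm T Λᴴ) Λ)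
    (hirr : ∀ W : Submodule ℂ (Fin n → ℂ),
      (∀ v ∈ W, Λ.mulVec v ∈ W) → (∀ v ∈ W, T.mulVec v ∈ W) → W = ⊥ ∨ W = ⊤) :
    n = 1 :=
  irreducible_unitary_rep_mu_zero_is_onedim_general n hn Λ T h1 hirr
end

section
/- Let S₁, S₂, S₃ be Hermitian n×n complex matrices satisfying the su(2) relations [S₁,S₂] = i·S₃, [S₂,S₃] = i·S₁, [S₃,S₁] = i·S₂, and let θ ∈ ℝ. Set Λ = e^{iθ}·S₃ and T = S₁ + i·S₂. Then (Λ, T) satisfies the DMSA equations with spectrum {2}: 4Λ = [[Λ,Λ†],Λ] + [[Λ,T],T†] + [[Λ,T†],T] and 4T = [[T,T†],T] + [[T,Λ],Λ†] + [[T,Λ†],Λ]. -/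
/-!
Put `h = S₃`, `x = S₁ + iS₂` and `y = S₁ − iS₂ = x†`. The su(2) relations become the ladder
relations `[h,x] = x`, `[h,y] = −y`, `[x,y] = 2h`, and `Λ = εh`, `Λ† = ε̄h` with `εε̄ = 1`.
Hence `[Λ,Λ†] = 0`, and the ladder relations evaluate every other double commutator:
`[[Λ,T],T†] = [[Λ,T†],T] = 2Λ`, `[[T,T†],T] = 2T` and `[[T,Λ],Λ†] = [[T,Λ†],Λ] = T`.
-/

open scoped Matrix

attribute [local instance] LieRing.ofAssociativeRing

theorem matComm_eq_lie {n : ℕ} (A B : Matrix (Fin n) (Fin n) ℂ) : matComm A B = ⁅A, B⁆ :=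
  (Ring.lie_def A B).symm

/-- The ladder relations: `(2 • h, x, y)` is an `IsSl2Triple` exactly when moreover `h ≠ 0`. -/
structure IsLadderTriple (R : Type*) {L : Type*} [CommRing R] [LieRing L] [LieAlgebra R L]
    (h x y : L) : Prop where
  lie_h_x : ⁅h, x⁆ = x
  lie_h_y : ⁅h, y⁆ = -y
  lie_x_y : ⁅x, y⁆ = (2 : R) • h

namespace IsLadderTriple

section CommRing

variable {R L : Type*} [CommRing R] [LieRing L] [LieAlgebra R L] {h x y : L}

theorem lie_lie_dmsa_fst (t : IsLadderTriple R h x y) (ε ε' : R) :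
    ⁅⁅ε • h, ε' • h⁆, ε • h⁆ + ⁅⁅ε • h, x⁆, y⁆ + ⁅⁅ε • h, y⁆, x⁆ = (4 : R) • (ε • h) := by
  simp only [smul_lie, lie_smul, lie_self, smul_zero, zero_lie, t.lie_h_x, t.lie_h_y, neg_lie,
    lie_skew, t.lie_x_y]
  module

theorem lie_lie_dmsa_snd (t : IsLadderTriple R h x y) {ε ε' : R} (hε : ε * ε' = 1) :
    ⁅⁅x, y⁆, x⁆ + ⁅⁅x, ε • h⁆, ε' • h⁆ + ⁅⁅x, ε' • h⁆, ε • h⁆ = (4 : R) • x := by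
  have lie_x_h : ⁅x, h⁆ = -x := by rw [← lie_skew, t.lie_h_x]
  simp only [smul_lie, lie_smul, t.lie_x_y, t.lie_h_x, lie_x_h, neg_lie, smul_neg, neg_neg]
  linear_combination (norm := module) (2 : R) • hε • x

end CommRing

open Complex in
theorem of_su2 {L : Type*} [LieRing L] [LieAlgebra ℂ L] {e₁ e₂ e₃ : L}
    (c₁ : ⁅e₁, e₂⁆ = I • e₃) (c₂ : ⁅e₂, e₃⁆ = I • e₁) (c₃ : ⁅e₃, e₁⁆ = I • e₂) :
    IsLadderTriple ℂ e₃ (e₁ + I • e₂) (e₁ - I • e₂) := by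
  have c₁' : ⁅e₂, e₁⁆ = -(I • e₃) := by rw [← lie_skew, c₁]
  have c₂' : ⁅e₃, e₂⁆ = -(I • e₁) := by rw [← lie_skew, c₂]
  constructor
  · simp only [lie_add, lie_smul, c₂', c₃]
    linear_combination (norm := module) -(I_sq • e₁)
  · simp only [lie_sub, lie_smul, c₂', c₃]
    linear_combination (norm := module) I_sq • e₁
  · simp only [lie_sub, add_lie, lie_smul, smul_lie, lie_self, c₁, c₁']
    linear_combination (norm := module) -(I_sq • (2 : ℂ) • e₃)

end IsLadderTriple

open Complex in
theorem Matrix.conjTranspose_add_I_smul {m : Type*} {A B : Matrix m m ℂ} (hA : A.IsHermitian)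
    (hB : B.IsHermitian) : (A + I • B)ᴴ = A - I • B := by
  rw [conjTranspose_add, conjTranspose_smul, hA.eq, hB.eq, star_def, conj_I, neg_smul,
    sub_eq_add_neg]

theorem exp_I_mul_ofReal_mul_star (θ : ℝ) :
    Complex.exp (Complex.I * θ) * star (Complex.exp (Complex.I * θ)) = 1 := by
  rw [Complex.star_def, ← Complex.exp_conj, ← Complex.exp_add]
  simp

/-- The fuzzy sphere: if Hermitian matrices `S₁, S₂, S₃` satisfy the `su(2)` relations
`[S₁,S₂] = iS₃`, `[S₂,S₃] = iS₁`, `[S₃,S₁] = iS₂`, then `Λ = e^{iθ}S₃` and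
`T = S₁ + iS₂` satisfy the DMSA equations with spectrum `{2}`. -/
theorem fuzzy_sphere_dmsa (n : ℕ) (S₁ S₂ S₃ : Matrix (Fin n) (Fin n) ℂ)
    (h₁ : S₁ᴴ = S₁) (h₂ : S₂ᴴ = S₂) (h₃ : S₃ᴴ = S₃)
    (c₁ : matComm S₁ S₂ = Complex.I • S₃)
    (c₂ : matComm S₂ S₃ = Complex.I • S₁)
    (c₃ : matComm S₃ S₁ = Complex.I • S₂)
    (θ : ℝ) (Λ T : Matrix (Fin n) (Fin n) ℂ)
    (hΛ : Λ = Complex.exp (Complex.I * (θ : ℂ)) • S₃) (hT : T = S₁ + Complex.I • S₂) :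
    (4 : ℂ) • Λ =
        matComm (matComm Λ Λᴴ) Λ + matComm (matComm Λ T) Tᴴ + matComm (matComm Λ Tᴴ) T ∧
      (4 : ℂ) • T =
        matComm (matComm T Tᴴ) T + matComm (matComm T Λ) Λᴴ + matComm (matComm T Λᴴ) Λ := by
  simp only [matComm_eq_lie] at c₁ c₂ c₃ ⊢
  have ladder := IsLadderTriple.of_su2 c₁ c₂ c₃
  subst hΛ hT
  rw [Matrix.conjTranspose_smul, h₃, Matrix.conjTranspose_add_I_smul h₁ h₂]
  exact ⟨(ladder.lie_lie_dmsa_fst _ _).symm,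
    (ladder.lie_lie_dmsa_snd (exp_I_mul_ofReal_mul_star θ)).symm⟩
end
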